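/- arXiv:1906.07862 — 3 statements merged into one kernel-verified Lean document; each statement's English description precedes it below -/
import Mathlib

section
/- Integrality of the state-transition network-flow polytope: every extreme point of the polyhedron of vectors (w, y, z, θ) (with w_t for t ∈ [t0,T], y_{tk} for (t,k) ∈ TK², z_{kt} for (k,t) ∈ KT, θ_t for t ∈ [t0,T−1]) satisfying the constraints (c1) Σ_{t=t0}^{T} w_t = 1; (c2) −w_t + Σ_{k:(t,k)∈KT} z_{tk} − Σ_{k:(k,t)∈TK²} y_{kt} + θ_t = 0 for all t ∈ [t0, T−1]; (c3) Σ_{k:(t,k)∈TK²} y_{tk} − Σ_{k:(k,t)∈KT} z_{kt} = 0 for all t ∈ [t0+ℓ+1, T]; together with w, y, z ≥ 0 and θ_t ≥ 0 for t ∈ [t0, T−ℓ−1], has all of its coordinates in {0,1}. -/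
namespace EUC

/-- Index set `TK¹ = {(1,k) : k ∈ [max(t0,1), T]}`. -/
noncomputable def TK1 (t0 T : ℤ) : Finset (ℤ × ℤ) :=
  (Finset.Icc (max t0 1) T).image fun k => ((1 : ℤ), k)

/-- Index set `TK² = {(t,k) : t ∈ [t0+ℓ+1, T], k ∈ [min(t+L−1, T), T]}`. -/
noncomputable def TK2 (t0 T L l : ℤ) : Finset (ℤ × ℤ) :=
  (Finset.Icc (t0 + l + 1) T).biUnion fun t =>
    (Finset.Icc (min (t + L - 1) T) T).image fun k => (t, k)

/-- Index set `TK = TK¹ ∪ TK²`. -/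
noncomputable def TK (t0 T L l : ℤ) : Finset (ℤ × ℤ) := TK1 t0 T ∪ TK2 t0 T L l

/-- Index set `KT = {(k,t) : k ∈ [t0, T−ℓ−1], t ∈ [k+ℓ+1, T]}`. -/
noncomputable def KT (t0 T l : ℤ) : Finset (ℤ × ℤ) :=
  (Finset.Icc t0 (T - l - 1)).biUnion fun k =>
    (Finset.Icc (k + l + 1) T).image fun t => (k, t)

/-- The space of EUC vectors `(w, y, z, θ, q, φ)`. -/
abbrev Pt : Type :=
  (ℤ → ℝ) × (ℤ → ℤ → ℝ) × (ℤ → ℤ → ℝ) × (ℤ → ℝ) × (ℤ → ℤ → ℤ → ℝ) × (ℤ → ℤ → ℤ → ℝ)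

def wOf (x : Pt) : ℤ → ℝ := x.1
def yOf (x : Pt) : ℤ → ℤ → ℝ := x.2.1
def zOf (x : Pt) : ℤ → ℤ → ℝ := x.2.2.1
def thOf (x : Pt) : ℤ → ℝ := x.2.2.2.1
def qOf (x : Pt) : ℤ → ℤ → ℤ → ℝ := x.2.2.2.2.1
def phOf (x : Pt) : ℤ → ℤ → ℤ → ℝ := x.2.2.2.2.2

/-- Membership in the EUC polyhedron `X_I`; coordinates outside the index sets
are fixed to `0` (the standard embedding of the polyhedron described on the
variables `w_t (t ∈ [t0,T])`, `y_{tk} ((t,k) ∈ TK²)`, `z_{kt} ((k,t) ∈ KT)`,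
`θ_t (t ∈ [t0,T−1])`, `q_{tk}^s, φ_{tk}^s ((t,k) ∈ TK, s ∈ [t,k])`). -/
def memXI (T L l t0 : ℤ) (Cmin Cmax Vbar V : ℝ) (N : ℤ)
    (a b : ℤ → ℤ → ℝ) (x : Pt) : Prop :=
  (∑ t ∈ Finset.Icc t0 T, wOf x t) = 1 ∧
  (∀ t ∈ Finset.Icc t0 (T - 1),
    -wOf x t + (∑ p ∈ (KT t0 T l).filter (fun p => p.1 = t), zOf x p.1 p.2)
      - (∑ p ∈ (TK2 t0 T L l).filter (fun p => p.2 = t), yOf x p.1 p.2)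
      + thOf x t = 0) ∧
  (∀ t ∈ Finset.Icc (t0 + l + 1) T,
    (∑ p ∈ (TK2 t0 T L l).filter (fun p => p.1 = t), yOf x p.1 p.2)
      - (∑ p ∈ (KT t0 T l).filter (fun p => p.2 = t), zOf x p.1 p.2) = 0) ∧
  (∀ p ∈ TK1 t0 T, ∀ s ∈ Finset.Icc p.1 p.2,
    Cmin * wOf x p.2 ≤ qOf x p.1 p.2 s ∧ qOf x p.1 p.2 s ≤ Cmax * wOf x p.2) ∧
  (∀ p ∈ TK2 t0 T L l, ∀ s ∈ Finset.Icc p.1 p.2,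
    Cmin * yOf x p.1 p.2 ≤ qOf x p.1 p.2 s ∧ qOf x p.1 p.2 s ≤ Cmax * yOf x p.1 p.2) ∧
  (∀ p ∈ TK2 t0 T L l, qOf x p.1 p.2 p.1 ≤ Vbar * yOf x p.1 p.2) ∧
  (∀ p ∈ TK1 t0 T, p.2 ≤ T - 1 → qOf x p.1 p.2 p.2 ≤ Vbar * wOf x p.2) ∧
  (∀ p ∈ TK2 t0 T L l, p.2 ≤ T - 1 → qOf x p.1 p.2 p.2 ≤ Vbar * yOf x p.1 p.2) ∧
  (∀ p ∈ TK1 t0 T, ∀ s ∈ Finset.Icc (p.1 + 1) p.2,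
    |qOf x p.1 p.2 s - qOf x p.1 p.2 (s - 1)| ≤ V * wOf x p.2) ∧
  (∀ p ∈ TK2 t0 T L l, ∀ s ∈ Finset.Icc (p.1 + 1) p.2,
    |qOf x p.1 p.2 s - qOf x p.1 p.2 (s - 1)| ≤ V * yOf x p.1 p.2) ∧
  (∀ p ∈ TK1 t0 T, ∀ s ∈ Finset.Icc p.1 p.2, ∀ j ∈ Finset.Icc 1 N,
    a j s * qOf x p.1 p.2 s + b j s * wOf x p.2 ≤ phOf x p.1 p.2 s) ∧
  (∀ p ∈ TK2 t0 T L l, ∀ s ∈ Finset.Icc p.1 p.2, ∀ j ∈ Finset.Icc 1 N,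
    a j s * qOf x p.1 p.2 s + b j s * yOf x p.1 p.2 ≤ phOf x p.1 p.2 s) ∧
  (∀ t ∈ Finset.Icc t0 T, 0 ≤ wOf x t) ∧
  (∀ p ∈ TK2 t0 T L l, 0 ≤ yOf x p.1 p.2) ∧
  (∀ p ∈ KT t0 T l, 0 ≤ zOf x p.1 p.2) ∧
  (∀ t ∈ Finset.Icc t0 (T - l - 1), 0 ≤ thOf x t) ∧
  (∀ t, t ∉ Finset.Icc t0 T → wOf x t = 0) ∧
  (∀ t k, (t, k) ∉ TK2 t0 T L l → yOf x t k = 0) ∧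
  (∀ k t, (k, t) ∉ KT t0 T l → zOf x k t = 0) ∧
  (∀ t, t ∉ Finset.Icc t0 (T - 1) → thOf x t = 0) ∧
  (∀ t k s, ((t, k) ∉ TK t0 T L l ∨ s ∉ Finset.Icc t k) →
    qOf x t k s = 0 ∧ phOf x t k s = 0)

/-- A point of `X_I` is binary if all of its `w, y, z, θ` coordinates lie in `{0,1}`. -/
def BinaryPt (T L l t0 : ℤ) (x : Pt) : Prop :=
  (∀ t ∈ Finset.Icc t0 T, wOf x t = 0 ∨ wOf x t = 1) ∧
  (∀ p ∈ TK2 t0 T L l, yOf x p.1 p.2 = 0 ∨ yOf x p.1 p.2 = 1) ∧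
  (∀ p ∈ KT t0 T l, zOf x p.1 p.2 = 0 ∨ zOf x p.1 p.2 = 1) ∧
  (∀ t ∈ Finset.Icc t0 (T - 1), thOf x t = 0 ∨ thOf x t = 1)

/-- The EUC objective `G`. -/
noncomputable def Gobj (T L l t0 s0 : ℤ) (S S' : ℤ → ℝ) (x : Pt) : ℝ :=
  (∑ t ∈ Finset.Icc t0 (T - 1), S' (t + s0) * wOf x t)
  + (∑ p ∈ (TK2 t0 T L l).filter (fun p => p.2 ≤ T - 1), S' (p.2 - p.1 + 1) * yOf x p.1 p.2)
  + (∑ p ∈ KT t0 T l, S (p.2 - p.1 - 1) * zOf x p.1 p.2)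
  + (∑ p ∈ TK t0 T L l, ∑ s ∈ Finset.Icc p.1 p.2, phOf x p.1 p.2 s)

/-- Aggregate output `Q(x)_s = Σ_{(t,k)∈TK : t≤s≤k} q_{tk}^s`. -/
noncomputable def Qout (T L l t0 : ℤ) (x : Pt) (s : ℤ) : ℝ :=
  ∑ p ∈ (TK t0 T L l).filter (fun p => p.1 ≤ s ∧ s ≤ p.2), qOf x p.1 p.2 s

/-- Inner product `⟨π, f⟩ = Σ_{s=1}^{T} π_s f_s` of vectors indexed by `[1,T]`. -/
noncomputable def priceInner (T : ℤ) (pr f : ℤ → ℝ) : ℝ := ∑ s ∈ Finset.Icc 1 T, pr s * f s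

/-- `max_{1≤j≤N} (a_j^t·xx + b_j^t·uu)`, the piecewise-linear net cost. -/
noncomputable def fmax (N : ℤ) (hN : 1 ≤ N) (a b : ℤ → ℤ → ℝ) (t : ℤ) (uu xx : ℝ) : ℝ :=
  (Finset.Icc 1 N).sup' (Finset.nonempty_Icc.mpr hN) (fun j => a j t * xx + b j t * uu)

/-- Feasibility for the 2-Bin unit-commitment MIP (binary requirements on `u, v`
included; the convention `u_0 := 1` is built in via `ue`). -/
def TwoBinFeas (T L l t0 s0 : ℤ) (Cmin Cmax Vbar V : ℝ) (S S' : ℤ → ℝ)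
    (u v xg zt zt' : ℤ → ℝ) : Prop :=
  let ue : ℤ → ℝ := fun t => if t = 0 then 1 else u t
  (∀ t ∈ Finset.Icc (1 : ℤ) T, u t = 0 ∨ u t = 1) ∧
  (∀ t ∈ Finset.Icc (1 : ℤ) T, v t = 0 ∨ v t = 1) ∧
  (∀ t ∈ Finset.Icc (t0 + l + 1) T, 0 ≤ zt t) ∧
  (∀ t ∈ Finset.Icc t0 (T - 1), 0 ≤ zt' t) ∧
  (∀ t ∈ Finset.Icc (1 : ℤ) t0, u t = 1) ∧
  (∀ t ∈ Finset.Icc (t0 + l + L) T, (∑ i ∈ Finset.Icc (t - L + 1) t, v i) ≤ u t) ∧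
  (∀ t ∈ Finset.Icc (t0 + l) T, (∑ i ∈ Finset.Icc (t - l + 1) t, v i) ≤ 1 - ue (t - l)) ∧
  (∀ t ∈ Finset.Icc (1 : ℤ) T, u t - ue (t - 1) - v t ≤ 0) ∧
  (∀ t ∈ Finset.Icc (1 : ℤ) T, Cmin * u t ≤ xg t ∧ xg t ≤ Cmax * u t) ∧
  (∀ t ∈ Finset.Icc (2 : ℤ) T, xg t - xg (t - 1) ≤ V * u (t - 1) + Vbar * (1 - u (t - 1))) ∧
  (∀ t ∈ Finset.Icc (2 : ℤ) T, xg (t - 1) - xg t ≤ V * u t + Vbar * (1 - u t)) ∧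
  (∀ t ∈ Finset.Icc t0 (T - 1),
    S' (t + s0) * (1 - u (t + 1) - ∑ s ∈ Finset.Icc 1 t, (1 - u s)) ≤ zt' t) ∧
  (∀ t ∈ Finset.Icc (t0 + l + L) (T - 1), ∀ k ∈ Finset.Icc (t0 + l + 1) (t - L + 1),
    S' (t - k + 1) * (v k - ∑ s ∈ Finset.Icc k t, (1 - u s)) ≤ zt' t) ∧
  (∀ t ∈ Finset.Icc (t0 + l + 1) T, ∀ k ∈ Finset.Icc t0 (t - l - 1),
    S (t - k - 1) * (v t - ∑ s ∈ Finset.Icc (k + 1) (t - 1), u s) ≤ zt t)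

/-- Objective of the 2-Bin unit-commitment MIP. -/
noncomputable def TwoBinObj (T l t0 : ℤ) (N : ℤ) (hN : 1 ≤ N) (a b : ℤ → ℤ → ℝ)
    (u xg zt zt' : ℤ → ℝ) : ℝ :=
  (∑ t ∈ Finset.Icc (1 : ℤ) T, fmax N hN a b t (u t) (xg t))
  + (∑ t ∈ Finset.Icc (t0 + l + 1) T, zt t)
  + (∑ t ∈ Finset.Icc t0 (T - 1), zt' t)

/-- Feasibility for the economic-dispatch problem on the on-interval `[t,k]`. -/
def EDfeas (T : ℤ) (Cmin Cmax Vbar V : ℝ) (t k : ℤ) (xg : ℤ → ℝ) : Prop :=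
  (∀ s ∈ Finset.Icc t k, Cmin ≤ xg s ∧ xg s ≤ Cmax) ∧
  (2 ≤ t → xg t ≤ Vbar) ∧
  (k ≤ T - 1 → xg k ≤ Vbar) ∧
  (∀ s ∈ Finset.Icc (t + 1) k, |xg s - xg (s - 1)| ≤ V)

/-- The economic-dispatch value `C(t,k)`. -/
noncomputable def Cval (T : ℤ) (Cmin Cmax Vbar V : ℝ) (N : ℤ) (hN : 1 ≤ N) (a b : ℤ → ℤ → ℝ)
    (t k : ℤ) : ℝ :=
  sInf {r : ℝ | ∃ xg : ℤ → ℝ, EDfeas T Cmin Cmax Vbar V t k xg ∧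
    r = ∑ s ∈ Finset.Icc t k, fmax N hN a b s 1 (xg s)}

/-- Commitment status recovered from an EUC point:
`u_s = Σ_{(1,k)∈TK¹ : k≥s} w_k + Σ_{(t,k)∈TK² : t≤s≤k} y_{tk}`. -/
noncomputable def usol (T L l t0 : ℤ) (x : Pt) (s : ℤ) : ℝ :=
  (∑ p ∈ (TK1 t0 T).filter (fun p => s ≤ p.2), wOf x p.2)
  + (∑ p ∈ (TK2 t0 T L l).filter (fun p => p.1 ≤ s ∧ s ≤ p.2), yOf x p.1 p.2)

/-- Start-up status recovered from an EUC point: `v_s = Σ_{(k,t)∈KT : t=s} z_{kt}`. -/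
noncomputable def vsol (T l t0 : ℤ) (x : Pt) (s : ℤ) : ℝ :=
  ∑ p ∈ (KT t0 T l).filter (fun p => p.2 = s), zOf x p.1 p.2


/-- The space of state-transition flow vectors `(w, y, z, θ)`. -/
abbrev Pt3 : Type := (ℤ → ℝ) × (ℤ → ℤ → ℝ) × (ℤ → ℤ → ℝ) × (ℤ → ℝ)

/-- The state-transition network-flow polytope on `(w, y, z, θ)`; coordinates
outside the index sets are fixed to `0`. -/
def memFlow (T L l t0 : ℤ) (p : Pt3) : Prop :=
  (∑ t ∈ Finset.Icc t0 T, p.1 t) = 1 ∧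
  (∀ t ∈ Finset.Icc t0 (T - 1),
    -p.1 t + (∑ e ∈ (KT t0 T l).filter (fun e => e.1 = t), p.2.2.1 e.1 e.2)
      - (∑ e ∈ (TK2 t0 T L l).filter (fun e => e.2 = t), p.2.1 e.1 e.2)
      + p.2.2.2 t = 0) ∧
  (∀ t ∈ Finset.Icc (t0 + l + 1) T,
    (∑ e ∈ (TK2 t0 T L l).filter (fun e => e.1 = t), p.2.1 e.1 e.2)
      - (∑ e ∈ (KT t0 T l).filter (fun e => e.2 = t), p.2.2.1 e.1 e.2) = 0) ∧
  (∀ t ∈ Finset.Icc t0 T, 0 ≤ p.1 t) ∧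
  (∀ e ∈ TK2 t0 T L l, 0 ≤ p.2.1 e.1 e.2) ∧
  (∀ e ∈ KT t0 T l, 0 ≤ p.2.2.1 e.1 e.2) ∧
  (∀ t ∈ Finset.Icc t0 (T - l - 1), 0 ≤ p.2.2.2 t) ∧
  (∀ t, t ∉ Finset.Icc t0 T → p.1 t = 0) ∧
  (∀ t k, (t, k) ∉ TK2 t0 T L l → p.2.1 t k = 0) ∧
  (∀ k t, (k, t) ∉ KT t0 T l → p.2.2.1 k t = 0) ∧
  (∀ t, t ∉ Finset.Icc t0 (T - 1) → p.2.2.2 t = 0)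


/-!
The polytope consists of the unit flows of an acyclic network. The off-node `t`
(constraint (c2)) receives `w_t` from the source and `y_{kt}`, and sends `z_{tk}` and `θ_t`
(to the sink); the on-node `k` (constraint (c3)) receives `z_{tk}` and sends `y_{kk'}`.
Every arc goes forward in time, so following arcs of positive flow from a source arc
`w_t > 0` yields a path whose `0/1` vector `x` lies in the polytope, with `p ≥ δ > 0` on the
arcs of the path. Then `p ± ε • (x - p)` stay in the polytope for small `ε > 0`, so an extreme
point `p` equals `x`.
-/

open Finset

theorem eq_zero_of_mem_extremePoints_of_add_mem_of_sub_mem {𝕜 E : Type*} [Field 𝕜]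
    [LinearOrder 𝕜] [IsStrictOrderedRing 𝕜] [AddCommGroup E] [Module 𝕜 E] {A : Set E}
    {x v : E} (hx : x ∈ A.extremePoints 𝕜) (hadd : x + v ∈ A) (hsub : x - v ∈ A) : v = 0 := by
  have hmid : x ∈ openSegment 𝕜 (x + v) (x - v) :=
    ⟨1 / 2, 1 / 2, by norm_num, by norm_num, by norm_num, by module⟩
  simpa using hx.2 hadd hsub hmid

theorem exists_pos_of_sum_filter_fst_pos {s : Finset (ℤ × ℤ)} {f : ℤ → ℤ → ℝ} {t : ℤ}
    (h : 0 < ∑ e ∈ s.filter (fun e => e.1 = t), f e.1 e.2) : ∃ k, (t, k) ∈ s ∧ 0 < f t k := by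
  by_contra! hle
  refine h.not_ge (sum_nonpos fun e he => ?_)
  obtain ⟨hes, rfl⟩ := mem_filter.mp he
  exact hle e.2 hes

theorem le_sum_filter_snd {s : Finset (ℤ × ℤ)} {f : ℤ → ℤ → ℝ} (hf : ∀ a b, 0 ≤ f a b)
    {a b : ℤ} (hab : (a, b) ∈ s) : f a b ≤ ∑ e ∈ s.filter (fun e => e.2 = b), f e.1 e.2 :=
  single_le_sum (f := fun e => f e.1 e.2) (fun e _ => hf e.1 e.2)
    (show (a, b) ∈ s.filter (fun e => e.2 = b) from mem_filter.mpr ⟨hab, rfl⟩)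

theorem Pt3.nonneg_iff {x : Pt3} :
    0 ≤ x ↔ (∀ a, 0 ≤ x.1 a) ∧ (∀ a b, 0 ≤ x.2.1 a b) ∧ (∀ a b, 0 ≤ x.2.2.1 a b) ∧
      ∀ a, 0 ≤ x.2.2.2 a := by
  simp [Prod.le_def, Pi.le_def]

noncomputable def netOutflowOff (T L l t0 : ℤ) (p : Pt3) (t : ℤ) : ℝ :=
  -p.1 t + (∑ e ∈ (KT t0 T l).filter (fun e => e.1 = t), p.2.2.1 e.1 e.2)
    - (∑ e ∈ (TK2 t0 T L l).filter (fun e => e.2 = t), p.2.1 e.1 e.2) + p.2.2.2 t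

noncomputable def netOutflowOn (T L l t0 : ℤ) (p : Pt3) (t : ℤ) : ℝ :=
  (∑ e ∈ (TK2 t0 T L l).filter (fun e => e.1 = t), p.2.1 e.1 e.2)
    - (∑ e ∈ (KT t0 T l).filter (fun e => e.2 = t), p.2.2.1 e.1 e.2)

noncomputable def inflowOff (T L l t0 : ℤ) (p : Pt3) (t : ℤ) : ℝ :=
  p.1 t + ∑ e ∈ (TK2 t0 T L l).filter (fun e => e.2 = t), p.2.1 e.1 e.2

def sourceArc (t : ℤ) : Pt3 := (fun a => if a = t then 1 else 0, 0, 0, 0)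

def sinkArc (t : ℤ) : Pt3 := (0, 0, 0, fun a => if a = t then 1 else 0)

def restartArcs (t k k' : ℤ) : Pt3 :=
  (0, fun a b => if (a, b) = (k, k') then 1 else 0, fun a b => if (a, b) = (t, k) then 1 else 0, 0)

section Network

variable {T L l t0 : ℤ}

theorem mk_mem_TK2 {a b : ℤ} :
    (a, b) ∈ TK2 t0 T L l ↔ t0 + l + 1 ≤ a ∧ a ≤ T ∧ min (a + L - 1) T ≤ b ∧ b ≤ T := by
  simp [TK2, and_assoc]

theorem mk_mem_KT {a b : ℤ} :
    (a, b) ∈ KT t0 T l ↔ t0 ≤ a ∧ a ≤ T - l - 1 ∧ a + l + 1 ≤ b ∧ b ≤ T := by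
  simp [KT, and_assoc]

theorem fst_le_snd_of_mem_TK2 (hL : 1 ≤ L) {a b : ℤ} (h : (a, b) ∈ TK2 t0 T L l) : a ≤ b := by
  have := mk_mem_TK2.mp h
  omega

theorem fst_lt_snd_of_mem_KT (hl : 0 ≤ l) {a b : ℤ} (h : (a, b) ∈ KT t0 T l) : a < b := by
  have := mk_mem_KT.mp h
  omega

theorem netOutflowOff_add (x y : Pt3) (t : ℤ) :
    netOutflowOff T L l t0 (x + y) t = netOutflowOff T L l t0 x t + netOutflowOff T L l t0 y t := by
  simp only [netOutflowOff, Prod.fst_add, Prod.snd_add, Pi.add_apply, sum_add_distrib]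
  ring

theorem netOutflowOff_smul (c : ℝ) (x : Pt3) (t : ℤ) :
    netOutflowOff T L l t0 (c • x) t = c * netOutflowOff T L l t0 x t := by
  simp only [netOutflowOff, Prod.smul_fst, Prod.smul_snd, Pi.smul_apply, smul_eq_mul, ← mul_sum]
  ring

theorem netOutflowOn_add (x y : Pt3) (t : ℤ) :
    netOutflowOn T L l t0 (x + y) t = netOutflowOn T L l t0 x t + netOutflowOn T L l t0 y t := by
  simp only [netOutflowOn, Prod.fst_add, Prod.snd_add, Pi.add_apply, sum_add_distrib]
  ring

theorem netOutflowOn_smul (c : ℝ) (x : Pt3) (t : ℤ) :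
    netOutflowOn T L l t0 (c • x) t = c * netOutflowOn T L l t0 x t := by
  simp only [netOutflowOn, Prod.smul_fst, Prod.smul_snd, Pi.smul_apply, smul_eq_mul, ← mul_sum]
  ring

@[simp] theorem netOutflowOff_zero (t : ℤ) : netOutflowOff T L l t0 0 t = 0 := by
  simp [netOutflowOff]

@[simp] theorem netOutflowOn_zero (t : ℤ) : netOutflowOn T L l t0 0 t = 0 := by
  simp [netOutflowOn]

@[simp] theorem netOutflowOff_sourceArc (s t : ℤ) :
    netOutflowOff T L l t0 (sourceArc s) t = -if t = s then 1 else 0 := by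
  simp [netOutflowOff, sourceArc]

@[simp] theorem netOutflowOn_sourceArc (s t : ℤ) : netOutflowOn T L l t0 (sourceArc s) t = 0 := by
  simp [netOutflowOn, sourceArc]

@[simp] theorem netOutflowOff_sinkArc (s t : ℤ) :
    netOutflowOff T L l t0 (sinkArc s) t = if t = s then 1 else 0 := by
  simp [netOutflowOff, sinkArc]

@[simp] theorem netOutflowOn_sinkArc (s t : ℤ) : netOutflowOn T L l t0 (sinkArc s) t = 0 := by
  simp [netOutflowOn, sinkArc]

theorem netOutflowOff_restartArcs {s k k' : ℤ} (hz : (s, k) ∈ KT t0 T l)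
    (hy : (k, k') ∈ TK2 t0 T L l) (t : ℤ) :
    netOutflowOff T L l t0 (restartArcs s k k') t =
      (if t = s then 1 else 0) - if t = k' then 1 else 0 := by
  simp only [netOutflowOff, restartArcs, Prod.mk.eta, sum_ite_eq', mem_filter]
  simp [hz, hy, eq_comm]

theorem netOutflowOn_restartArcs {s k k' : ℤ} (hz : (s, k) ∈ KT t0 T l)
    (hy : (k, k') ∈ TK2 t0 T L l) (t : ℤ) :
    netOutflowOn T L l t0 (restartArcs s k k') t = 0 := by
  simp only [netOutflowOn, restartArcs, Prod.mk.eta, sum_ite_eq', mem_filter]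
  simp [hz, hy]

theorem memFlow.nonneg {p : Pt3} (hp : memFlow T L l t0 p) : 0 ≤ p := by
  obtain ⟨-, hoff, -, hw, hy, hz, hθ, hw0, hy0, hz0, hθ0⟩ := hp
  have hw' : ∀ a, 0 ≤ p.1 a := fun a => by
    by_cases ha : a ∈ Icc t0 T
    exacts [hw a ha, (hw0 a ha).ge]
  have hy' : ∀ a b, 0 ≤ p.2.1 a b := fun a b => by
    by_cases hab : (a, b) ∈ TK2 t0 T L l
    exacts [hy _ hab, (hy0 a b hab).ge]
  have hz' : ∀ a b, 0 ≤ p.2.2.1 a b := fun a b => by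
    by_cases hab : (a, b) ∈ KT t0 T l
    exacts [hz _ hab, (hz0 a b hab).ge]
  refine Pt3.nonneg_iff.mpr ⟨hw', hy', hz', fun a => ?_⟩
  by_cases ha : a ∈ Icc t0 (T - 1)
  swap
  · exact (hθ0 a ha).ge
  by_cases hal : a ≤ T - l - 1
  · exact hθ a (mem_Icc.mpr ⟨(mem_Icc.mp ha).1, hal⟩)
  -- no arc of `KT` leaves an off-node this late, so `θ_a` is the whole inflow into `a`
  have hzout : ∑ e ∈ (KT t0 T l).filter (fun e => e.1 = a), p.2.2.1 e.1 e.2 = 0 :=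
    sum_eq_zero fun ⟨b, c⟩ he => by
      simp only [mem_filter, mk_mem_KT] at he
      omega
  have hbal := hoff a ha
  rw [hzout] at hbal
  have := sum_nonneg fun e (_ : e ∈ (TK2 t0 T L l).filter (fun e => e.2 = a)) => hy' e.1 e.2
  linarith [hw' a]

theorem memFlow_smul_add_smul {u v : Pt3} {a b : ℝ} (hu : memFlow T L l t0 u)
    (hv : memFlow T L l t0 v) (hab : a + b = 1) (hnonneg : 0 ≤ a • u + b • v) :
    memFlow T L l t0 (a • u + b • v) := by
  obtain ⟨hu1, hu2, hu3, -, -, -, -, hu8, hu9, hu10, hu11⟩ := hu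
  obtain ⟨hv1, hv2, hv3, -, -, -, -, hv8, hv9, hv10, hv11⟩ := hv
  obtain ⟨hw, hy, hz, hθ⟩ := Pt3.nonneg_iff.mp hnonneg
  refine ⟨?_, fun t ht => ?_, fun t ht => ?_, fun t _ => hw t, fun e _ => hy e.1 e.2,
    fun e _ => hz e.1 e.2, fun t _ => hθ t, fun t ht => ?_, fun t k h => ?_, fun t k h => ?_,
    fun t ht => ?_⟩
  · simp [sum_add_distrib, ← mul_sum, hu1, hv1, hab]
  · have hut : netOutflowOff T L l t0 u t = 0 := hu2 t ht
    have hvt : netOutflowOff T L l t0 v t = 0 := hv2 t ht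
    change netOutflowOff T L l t0 _ t = 0
    simp [netOutflowOff_add, netOutflowOff_smul, hut, hvt]
  · have hut : netOutflowOn T L l t0 u t = 0 := hu3 t ht
    have hvt : netOutflowOn T L l t0 v t = 0 := hv3 t ht
    change netOutflowOn T L l t0 _ t = 0
    simp [netOutflowOn_add, netOutflowOn_smul, hut, hvt]
  all_goals simp [*]

theorem memFlow.inflowOff_pos {p : Pt3} (hp : memFlow T L l t0 p) {k k' : ℤ}
    (hy : (k, k') ∈ TK2 t0 T L l) (hpos : 0 < p.2.1 k k') : 0 < inflowOff T L l t0 p k' := by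
  obtain ⟨hpw, hpy, -, -⟩ := Pt3.nonneg_iff.mp hp.nonneg
  unfold inflowOff
  linarith [hpw k', le_sum_filter_snd hpy hy]

theorem memFlow.exists_restartArcs_pos {p : Pt3} (hp : memFlow T L l t0 p) {t : ℤ}
    (ht : t ∈ Icc t0 (T - 1)) (hin : 0 < inflowOff T L l t0 p t) (hθ : p.2.2.2 t ≤ 0) :
    ∃ k k', (t, k) ∈ KT t0 T l ∧ (k, k') ∈ TK2 t0 T L l ∧ 0 < p.2.2.1 t k ∧ 0 < p.2.1 k k' := by
  obtain ⟨-, -, hpz, -⟩ := Pt3.nonneg_iff.mp hp.nonneg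
  have hoff := hp.2.1 t ht
  unfold inflowOff at hin
  have hzout : 0 < ∑ e ∈ (KT t0 T l).filter (fun e => e.1 = t), p.2.2.1 e.1 e.2 := by linarith
  obtain ⟨k, hz, hzpos⟩ := exists_pos_of_sum_filter_fst_pos hzout
  have hk : k ∈ Icc (t0 + l + 1) T := by
    have := mk_mem_KT.mp hz
    rw [mem_Icc]
    omega
  have hon := hp.2.2.1 k hk
  have hyout : 0 < ∑ e ∈ (TK2 t0 T L l).filter (fun e => e.1 = k), p.2.1 e.1 e.2 := by
    linarith [le_sum_filter_snd hpz hz]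
  obtain ⟨k', hy, hypos⟩ := exists_pos_of_sum_filter_fst_pos hyout
  exact ⟨k, k', hz, hy, hzpos, hypos⟩

end Network

def IsZeroOneUnder (δ c q : ℝ) : Prop := c ≠ 0 → c = 1 ∧ δ ≤ q

namespace IsZeroOneUnder

variable {δ δ' c q : ℝ}

theorem eq_zero_or_eq_one (h : IsZeroOneUnder δ c q) : c = 0 ∨ c = 1 :=
  or_iff_not_imp_left.mpr fun hc => (h hc).1

theorem nonneg (h : IsZeroOneUnder δ c q) : 0 ≤ c := by
  rcases h.eq_zero_or_eq_one with hc | hc <;> simp [hc]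

theorem eq_zero (h : IsZeroOneUnder δ c q) (hδ : 0 < δ) (hq : q = 0) : c = 0 := by
  by_contra hc
  linarith [(h hc).2]

theorem mono (h : IsZeroOneUnder δ c q) (hδ : δ' ≤ δ) : IsZeroOneUnder δ' c q :=
  fun hc => (h hc).imp_right hδ.trans

theorem ite_add {P : Prop} [Decidable P] (h : IsZeroOneUnder δ c q) (hP : P → c = 0 ∧ δ ≤ q) :
    IsZeroOneUnder δ ((if P then 1 else 0) + c) q := by
  by_cases hp : P
  · simp [IsZeroOneUnder, hp, hP hp]
  · simpa [hp] using h

theorem add_mul_sub_nonneg (h : IsZeroOneUnder δ c q) (hq : 0 ≤ q) {s : ℝ} (hsδ : |s| ≤ δ)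
    (hs1 : s ≤ 1) : 0 ≤ q + s * (c - q) := by
  have := abs_le.mp hsδ
  rcases eq_or_ne c 0 with hc | hc
  · rw [hc]
    nlinarith
  · obtain ⟨rfl, hδq⟩ := h hc
    rcases le_total 0 s with hs | hs <;> nlinarith

end IsZeroOneUnder

def IsIndicatorUnder (δ : ℝ) (x p : Pt3) : Prop :=
  (∀ a, IsZeroOneUnder δ (x.1 a) (p.1 a)) ∧ (∀ a b, IsZeroOneUnder δ (x.2.1 a b) (p.2.1 a b)) ∧
  (∀ a b, IsZeroOneUnder δ (x.2.2.1 a b) (p.2.2.1 a b)) ∧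
  ∀ a, IsZeroOneUnder δ (x.2.2.2 a) (p.2.2.2 a)

/-- `x` is the `0/1` vector of a path from the off-node `t` to the sink, through arcs on which
`p ≥ δ`. -/
structure IsTailFrom (T L l t0 : ℤ) (p : Pt3) (δ : ℝ) (t : ℤ) (x : Pt3) : Prop where
  fst_eq_zero : x.1 = 0
  indicatorUnder : IsIndicatorUnder δ x p
  snd_eq_zero_of_le : ∀ a b, a ≤ t → x.2.1 a b = 0
  thd_eq_zero_of_lt : ∀ a b, a < t → x.2.2.1 a b = 0
  netOutflowOff_eq : ∀ a ∈ Icc t0 (T - 1), netOutflowOff T L l t0 x a = if a = t then 1 else 0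
  netOutflowOn_eq : ∀ a ∈ Icc (t0 + l + 1) T, netOutflowOn T L l t0 x a = 0

section Paths

variable {T L l t0 : ℤ} {p x : Pt3} {δ δ' : ℝ}

theorem IsIndicatorUnder.mono (hx : IsIndicatorUnder δ x p) (h : δ' ≤ δ) :
    IsIndicatorUnder δ' x p := by
  obtain ⟨hw, hy, hz, hθ⟩ := hx
  exact ⟨fun a => (hw a).mono h, fun a b => (hy a b).mono h, fun a b => (hz a b).mono h,
    fun a => (hθ a).mono h⟩

theorem IsTailFrom.mono (hx : IsTailFrom T L l t0 p δ t x) (h : δ' ≤ δ) :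
    IsTailFrom T L l t0 p δ' t x :=
  { hx with indicatorUnder := hx.indicatorUnder.mono h }

theorem isTailFrom_zero : IsTailFrom T L l t0 p δ T 0 where
  fst_eq_zero := rfl
  indicatorUnder := by simp [IsIndicatorUnder, IsZeroOneUnder]
  snd_eq_zero_of_le _ _ _ := rfl
  thd_eq_zero_of_lt _ _ _ := rfl
  netOutflowOff_eq a ha := by
    have : a ≠ T := by grind
    simp [this]
  netOutflowOn_eq a _ := netOutflowOn_zero a

theorem isTailFrom_sinkArc (t : ℤ) : IsTailFrom T L l t0 p (p.2.2.2 t) t (sinkArc t) where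
  fst_eq_zero := rfl
  indicatorUnder := by simp +contextual [IsIndicatorUnder, IsZeroOneUnder, sinkArc]
  snd_eq_zero_of_le _ _ _ := rfl
  thd_eq_zero_of_lt _ _ _ := rfl
  netOutflowOff_eq a _ := netOutflowOff_sinkArc t a
  netOutflowOn_eq a _ := netOutflowOn_sinkArc t a

theorem IsTailFrom.restartArcs_add (hL : 1 ≤ L) (hl : 0 ≤ l) {t k k' : ℤ}
    (hx : IsTailFrom T L l t0 p δ k' x) (hz : (t, k) ∈ KT t0 T l) (hy : (k, k') ∈ TK2 t0 T L l)
    (hzδ : δ ≤ p.2.2.1 t k) (hyδ : δ ≤ p.2.1 k k') :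
    IsTailFrom T L l t0 p δ t (restartArcs t k k' + x) := by
  have htk := fst_lt_snd_of_mem_KT hl hz
  have hkk' := fst_le_snd_of_mem_TK2 hL hy
  obtain ⟨-, hxy, hxz, hxθ⟩ := hx.indicatorUnder
  refine ⟨by simp [restartArcs, hx.fst_eq_zero], ⟨?_, fun a b => ?_, fun a b => ?_, ?_⟩,
    fun a b ha => ?_, fun a b ha => ?_, fun a ha => ?_, fun a ha => ?_⟩
  · simp [restartArcs, hx.fst_eq_zero, IsZeroOneUnder]
  · simpa [restartArcs] using (hxy a b).ite_add (P := a = k ∧ b = k') <| by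
      rintro ⟨rfl, rfl⟩
      exact ⟨hx.snd_eq_zero_of_le _ _ hkk', hyδ⟩
  · simpa [restartArcs] using (hxz a b).ite_add (P := a = t ∧ b = k) <| by
      rintro ⟨rfl, rfl⟩
      exact ⟨hx.thd_eq_zero_of_lt _ _ (by omega), hzδ⟩
  · simpa [restartArcs] using hxθ
  · simp [restartArcs, show a ≠ k by omega, hx.snd_eq_zero_of_le a b (by omega)]
  · simp [restartArcs, show a ≠ t by omega, hx.thd_eq_zero_of_lt a b (by omega)]
  · rw [netOutflowOff_add, netOutflowOff_restartArcs hz hy, hx.netOutflowOff_eq a ha]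
    ring
  · rw [netOutflowOn_add, netOutflowOn_restartArcs hz hy, hx.netOutflowOn_eq a ha, add_zero]

theorem exists_isTailFrom (hL : 1 ≤ L) (hl : 0 ≤ l) (hp : memFlow T L l t0 p) (t : ℤ)
    (ht0 : t0 ≤ t) (htT : t ≤ T) (hin : 0 < inflowOff T L l t0 p t) :
    ∃ δ > 0, ∃ x, IsTailFrom T L l t0 p δ t x := by
  rcases htT.eq_or_lt with rfl | htT
  · exact ⟨1, one_pos, 0, isTailFrom_zero⟩
  by_cases hθ : 0 < p.2.2.2 t
  · exact ⟨_, hθ, _, isTailFrom_sinkArc t⟩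
  obtain ⟨k, k', hz, hy, hzpos, hypos⟩ :=
    hp.exists_restartArcs_pos (mem_Icc.mpr ⟨ht0, by omega⟩) hin (not_lt.mp hθ)
  have htk' : t < k' := (fst_lt_snd_of_mem_KT hl hz).trans_le (fst_le_snd_of_mem_TK2 hL hy)
  obtain ⟨δ, hδ, x, hx⟩ := exists_isTailFrom hL hl hp k' (by omega)
    (mk_mem_TK2.mp hy).2.2.2 (hp.inflowOff_pos hy hypos)
  refine ⟨min δ (min (p.2.2.1 t k) (p.2.1 k k')), by positivity, _,
    (hx.mono (min_le_left _ _)).restartArcs_add hL hl hz hy ?_ ?_⟩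
  · exact (min_le_right _ _).trans (min_le_left _ _)
  · exact (min_le_right _ _).trans (min_le_right _ _)
termination_by (T - t).toNat

theorem memFlow_of_isIndicatorUnder (hp : memFlow T L l t0 p) (hδ : 0 < δ)
    (hx : IsIndicatorUnder δ x p) (hsum : ∑ t ∈ Icc t0 T, x.1 t = 1)
    (hoff : ∀ t ∈ Icc t0 (T - 1), netOutflowOff T L l t0 x t = 0)
    (hon : ∀ t ∈ Icc (t0 + l + 1) T, netOutflowOn T L l t0 x t = 0) :
    memFlow T L l t0 x := by
  obtain ⟨-, -, -, -, -, -, -, hpw, hpy, hpz, hpθ⟩ := hp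
  obtain ⟨hw, hy, hz, hθ⟩ := hx
  exact ⟨hsum, hoff, hon, fun t _ => (hw t).nonneg, fun e _ => (hy _ _).nonneg,
    fun e _ => (hz _ _).nonneg, fun t _ => (hθ t).nonneg,
    fun t ht => (hw t).eq_zero hδ (hpw t ht), fun a b h => (hy a b).eq_zero hδ (hpy a b h),
    fun a b h => (hz a b).eq_zero hδ (hpz a b h), fun t ht => (hθ t).eq_zero hδ (hpθ t ht)⟩

theorem exists_memFlow_isIndicatorUnder (hL : 1 ≤ L) (hl : 0 ≤ l) (hp : memFlow T L l t0 p) :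
    ∃ δ > 0, ∃ x, memFlow T L l t0 x ∧ IsIndicatorUnder δ x p := by
  obtain ⟨hpw, hpy, -, -⟩ := Pt3.nonneg_iff.mp hp.nonneg
  obtain ⟨t, ht, hwt⟩ : ∃ t ∈ Icc t0 T, p.1 t ≠ 0 :=
    exists_ne_zero_of_sum_ne_zero (by rw [hp.1]; exact one_ne_zero)
  replace hwt : 0 < p.1 t := (hpw t).lt_of_ne' hwt
  obtain ⟨δ, hδ, x, hx⟩ := exists_isTailFrom hL hl hp t (mem_Icc.mp ht).1 (mem_Icc.mp ht).2
    (add_pos_of_pos_of_nonneg hwt (sum_nonneg fun e _ => hpy e.1 e.2))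
  obtain ⟨-, hy, hz, hθ⟩ := (hx.mono (min_le_left δ (p.1 t))).indicatorUnder
  have hpath : IsIndicatorUnder (min δ (p.1 t)) (sourceArc t + x) p :=
    ⟨by simp +contextual [IsZeroOneUnder, sourceArc, hx.fst_eq_zero],
      by simpa [sourceArc] using hy, by simpa [sourceArc] using hz, by simpa [sourceArc] using hθ⟩
  refine ⟨_, by positivity, _, memFlow_of_isIndicatorUnder hp (by positivity) hpath ?_
    (fun a ha => ?_) (fun a ha => ?_), hpath⟩
  · simp [sourceArc, hx.fst_eq_zero, ht]
  · rw [netOutflowOff_add, netOutflowOff_sourceArc, hx.netOutflowOff_eq a ha, neg_add_cancel]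
  · rw [netOutflowOn_add, netOutflowOn_sourceArc, hx.netOutflowOn_eq a ha, add_zero]

theorem memFlow_add_smul_sub (hp : memFlow T L l t0 p) (hx : memFlow T L l t0 x)
    (hxp : IsIndicatorUnder δ x p) {s : ℝ} (hsδ : |s| ≤ δ) (hs1 : s ≤ 1) :
    memFlow T L l t0 (p + s • (x - p)) := by
  have hcomb : p + s • (x - p) = (1 - s) • p + s • x := by module
  rw [hcomb]
  refine memFlow_smul_add_smul hp hx (by ring) ?_
  rw [← hcomb]
  obtain ⟨hpw, hpy, hpz, hpθ⟩ := Pt3.nonneg_iff.mp hp.nonneg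
  obtain ⟨hw, hy, hz, hθ⟩ := hxp
  exact Pt3.nonneg_iff.mpr ⟨fun a => (hw a).add_mul_sub_nonneg (hpw a) hsδ hs1,
    fun a b => (hy a b).add_mul_sub_nonneg (hpy a b) hsδ hs1,
    fun a b => (hz a b).add_mul_sub_nonneg (hpz a b) hsδ hs1,
    fun a => (hθ a).add_mul_sub_nonneg (hpθ a) hsδ hs1⟩

end Paths

theorem flow_polytope_integral_general (T L l t0 : ℤ) (hL : 1 ≤ L) (hl : 1 ≤ l) :
    ∀ p ∈ Set.extremePoints ℝ {p : Pt3 | memFlow T L l t0 p},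
      (∀ t, p.1 t = 0 ∨ p.1 t = 1) ∧
      (∀ t k, p.2.1 t k = 0 ∨ p.2.1 t k = 1) ∧
      (∀ k t, p.2.2.1 k t = 0 ∨ p.2.2.1 k t = 1) ∧
      (∀ t, p.2.2.2 t = 0 ∨ p.2.2.2 t = 1) := by
  intro p hp
  obtain ⟨δ, hδ, x, hx, hxp⟩ := exists_memFlow_isIndicatorUnder hL (by omega) hp.1
  set ε := min δ 1
  have hε : 0 < ε := by positivity
  have hmem : ∀ s, |s| ≤ ε → p + s • (x - p) ∈ {p : Pt3 | memFlow T L l t0 p} := fun s hs =>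
    memFlow_add_smul_sub hp.1 hx hxp (hs.trans (min_le_left _ _))
      ((le_abs_self s).trans (hs.trans (min_le_right _ _)))
  have hzero : ε • (x - p) = 0 :=
    eq_zero_of_mem_extremePoints_of_add_mem_of_sub_mem hp (hmem ε (abs_of_pos hε).le)
      (by simpa [neg_smul, ← sub_eq_add_neg] using hmem (-ε) (by rw [abs_neg, abs_of_pos hε]))
  obtain rfl : x = p := by simpa [hε.ne', sub_eq_zero] using hzero
  obtain ⟨hw, hy, hz, hθ⟩ := hxp
  exact ⟨fun a => (hw a).eq_zero_or_eq_one, fun a b => (hy a b).eq_zero_or_eq_one,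
    fun a b => (hz a b).eq_zero_or_eq_one, fun a => (hθ a).eq_zero_or_eq_one⟩

/-- integrality of the state-transition network-flow polytope:
every extreme point has all of its coordinates in `{0,1}`. -/
theorem flow_polytope_integral (T L l s0 t0 : ℤ)
    (hT : 2 ≤ T) (hL : 1 ≤ L) (hl : 1 ≤ l) (hs0 : 1 ≤ s0)
    (ht0 : t0 = max (L - s0) 0) (ht0T : t0 ≤ T - 1) :
    ∀ p ∈ Set.extremePoints ℝ {p : Pt3 | memFlow T L l t0 p},
      (∀ t, p.1 t = 0 ∨ p.1 t = 1) ∧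
      (∀ t k, p.2.1 t k = 0 ∨ p.2.1 t k = 1) ∧
      (∀ k t, p.2.2.1 k t = 0 ∨ p.2.2.1 k t = 1) ∧
      (∀ t, p.2.2.2 t = 0 ∨ p.2.2.2 t = 1) :=
  flow_polytope_integral_general T L l t0 hL hl

end EUC
end

section
/- Linear-programming formulation of the dynamic program: the linear program that maximizes Φ over real variables Φ, V_down(t) for t ∈ [t0, T], and V_up(t) for t ∈ [t0+ℓ+1, T], subject to Φ ≤ S'(t+s0) + C(1,t) + V_down(t) for all t ∈ [t0, T−1]; Φ ≤ C(1,T); V_down(k) ≤ S(t−k−1) + V_up(t) for all (k,t) ∈ KT; V_down(t) ≤ 0 for t ∈ [t0, T−ℓ−1]; V_down(t) = 0 for t ∈ [T−ℓ, T]; V_up(t) ≤ S'(k−t+1) + C(t,k) + V_down(k) for all t ∈ [t0+ℓ+1, T−L] and k ∈ [t+L−1, T−1]; V_up(t) ≤ C(t,T) for t ∈ [t0+ℓ+1, T−L]; and V_up(t) = C(t,T) for t ∈ [max(T−L+1, t0+ℓ+1), T], has an attained optimal value equal to the dynamic-programming value V_up*(0). -/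
namespace EUC

/-- Feasibility for the LP formulation of the dynamic program. -/
def LPfeasDP (T L l t0 s0 : ℤ) (Cmin Cmax Vbar V : ℝ) (N : ℤ) (hN : 1 ≤ N)
    (a b : ℤ → ℤ → ℝ) (S S' : ℤ → ℝ) (Ph : ℝ) (Vd Vu : ℤ → ℝ) : Prop :=
  (∀ t ∈ Finset.Icc t0 (T - 1),
    Ph ≤ S' (t + s0) + Cval T Cmin Cmax Vbar V N hN a b 1 t + Vd t) ∧
  Ph ≤ Cval T Cmin Cmax Vbar V N hN a b 1 T ∧
  (∀ p ∈ KT t0 T l, Vd p.1 ≤ S (p.2 - p.1 - 1) + Vu p.2) ∧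
  (∀ t ∈ Finset.Icc t0 (T - l - 1), Vd t ≤ 0) ∧
  (∀ t ∈ Finset.Icc (T - l) T, Vd t = 0) ∧
  (∀ t ∈ Finset.Icc (t0 + l + 1) (T - L), ∀ k ∈ Finset.Icc (t + L - 1) (T - 1),
    Vu t ≤ S' (k - t + 1) + Cval T Cmin Cmax Vbar V N hN a b t k + Vd k) ∧
  (∀ t ∈ Finset.Icc (t0 + l + 1) (T - L), Vu t ≤ Cval T Cmin Cmax Vbar V N hN a b t T) ∧
  (∀ t ∈ Finset.Icc (max (T - L + 1) (t0 + l + 1)) T, Vu t = Cval T Cmin Cmax Vbar V N hN a b t T)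

lemma mem_KT {t0 T l k t : ℤ} :
    (k, t) ∈ KT t0 T l ↔ (t0 ≤ k ∧ k ≤ T - l - 1) ∧ (k + l + 1 ≤ t ∧ t ≤ T) := by
  simp only [KT, Finset.mem_biUnion, Finset.mem_image, Finset.mem_Icc, Prod.mk.injEq]
  constructor
  · rintro ⟨k', hk', t', ht', hkk, htt⟩
    subst hkk; subst htt; exact ⟨hk', ht'⟩
  · rintro ⟨hk, ht⟩; exact ⟨k, hk, t, ht, rfl, rfl⟩

lemma csInf_image_le {f : ℤ → ℝ} {a b x : ℤ} (h : x ∈ Set.Icc a b) :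
    sInf (f '' Set.Icc a b) ≤ f x :=
  csInf_le ((Set.finite_Icc a b).image f).bddBelow ⟨x, h, rfl⟩

lemma le_csInf_image {f : ℤ → ℝ} {a b : ℤ} {c : ℝ} (hab : a ≤ b)
    (h : ∀ x ∈ Set.Icc a b, c ≤ f x) : c ≤ sInf (f '' Set.Icc a b) :=
  le_csInf ((Set.nonempty_Icc.mpr hab).image f) (by rintro _ ⟨x, hx, rfl⟩; exact h x hx)

/-- the LP formulation of the dynamic program has an attained
optimal value equal to the dynamic-programming value `V_up*(0)`. -/
theorem dp_lp_value (T L l s0 t0 : ℤ) (Cmin Cmax Vbar V : ℝ) (N : ℤ)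
    (a b : ℤ → ℤ → ℝ) (S S' : ℤ → ℝ)
    (hT : 2 ≤ T) (hL : 1 ≤ L) (hl : 1 ≤ l) (hs0 : 1 ≤ s0)
    (ht0 : t0 = max (L - s0) 0) (ht0T : t0 ≤ T - 1)
    (hCmin : 0 ≤ Cmin) (hCC : Cmin ≤ Cmax) (hVbar : Cmin ≤ Vbar) (hV : 0 ≤ V)
    (hN : 1 ≤ N) (hS : ∀ n, 0 ≤ S n) (hS' : ∀ n, 0 ≤ S' n)
    (Vds Vus : ℤ → ℝ) (vstar : ℝ)
    (hVd0 : ∀ t ∈ Finset.Icc (T - l) T, Vds t = 0)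
    (hVdr : ∀ t ∈ Finset.Icc t0 (T - l - 1),
      Vds t = min 0 (sInf ((fun k => S (k - t - 1) + Vus k) '' (Set.Icc (t + l + 1) T))))
    (hVu0 : ∀ t ∈ Finset.Icc (T - L + 1) T, Vus t = Cval T Cmin Cmax Vbar V N hN a b t T)
    (hVur : ∀ t ∈ Finset.Icc (t0 + l + 1) (T - L),
      Vus t = min (Cval T Cmin Cmax Vbar V N hN a b t T)
        (sInf ((fun k => S' (k - t + 1) + Cval T Cmin Cmax Vbar V N hN a b t k + Vds k) ''
          (Set.Icc (t + L - 1) (T - 1)))))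
    (hvstar : vstar = min (Cval T Cmin Cmax Vbar V N hN a b 1 T)
      (sInf ((fun t => S' (t + s0) + Cval T Cmin Cmax Vbar V N hN a b 1 t + Vds t) '' (Set.Icc t0 (T - 1))))) :
    (∃ Ph : ℝ, ∃ Vd Vu : ℤ → ℝ,
      LPfeasDP T L l t0 s0 Cmin Cmax Vbar V N hN a b S S' Ph Vd Vu ∧ Ph = vstar) ∧
    (∀ (Ph : ℝ) (Vd Vu : ℤ → ℝ),
      LPfeasDP T L l t0 s0 Cmin Cmax Vbar V N hN a b S S' Ph Vd Vu → Ph ≤ vstar) := by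
  have hfeas : LPfeasDP T L l t0 s0 Cmin Cmax Vbar V N hN a b S S' vstar Vds Vus := by
    refine ⟨?_, ?_, ?_, ?_, hVd0, ?_, ?_, ?_⟩
    · intro t ht
      rw [hvstar]
      exact (min_le_right _ _).trans
        (csInf_image_le (Set.mem_Icc.mpr (Finset.mem_Icc.mp ht)))
    · rw [hvstar]; exact min_le_left _ _
    · intro p hp
      obtain ⟨⟨hk1, hk2⟩, ht1, ht2⟩ := mem_KT.mp hp
      rw [hVdr p.1 (Finset.mem_Icc.mpr ⟨hk1, hk2⟩)]
      exact (min_le_right _ _).trans (csInf_image_le (Set.mem_Icc.mpr ⟨ht1, ht2⟩))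
    · intro t ht; rw [hVdr t ht]; exact min_le_left _ _
    · intro t ht k hk
      rw [hVur t ht]
      exact (min_le_right _ _).trans
        (csInf_image_le (Set.mem_Icc.mpr (Finset.mem_Icc.mp hk)))
    · intro t ht; rw [hVur t ht]; exact min_le_left _ _
    · intro t ht
      obtain ⟨h1, h2⟩ := Finset.mem_Icc.mp ht
      exact hVu0 t (Finset.mem_Icc.mpr ⟨le_trans (le_max_left _ _) h1, h2⟩)
  refine ⟨⟨vstar, Vds, Vus, hfeas, rfl⟩, ?_⟩
  intro Ph Vd Vu hfe
  obtain ⟨h1, h2, h3, h4, h5, h6, h7, h8⟩ := hfe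
  have main : ∀ n : ℕ, ∀ t : ℤ, (T - t).toNat = n →
      (t0 ≤ t → t ≤ T → Vd t ≤ Vds t) ∧ (t0 + l + 1 ≤ t → t ≤ T → Vu t ≤ Vus t) := by
    intro n
    induction n using Nat.strong_induction_on with
    | _ n ih =>
      intro t hn
      have hD : t0 ≤ t → t ≤ T → Vd t ≤ Vds t := by
        intro hta htb
        by_cases hc : T - l ≤ t
        · rw [h5 t (Finset.mem_Icc.mpr ⟨hc, htb⟩), hVd0 t (Finset.mem_Icc.mpr ⟨hc, htb⟩)]
        · push_neg at hc
          have hc' : t ≤ T - l - 1 := by omega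
          rw [hVdr t (Finset.mem_Icc.mpr ⟨hta, hc'⟩)]
          refine le_min (h4 t (Finset.mem_Icc.mpr ⟨hta, hc'⟩)) (le_csInf_image (by omega) ?_)
          intro k hk
          obtain ⟨hkt, hkT⟩ := Set.mem_Icc.mp hk
          have hU : Vu k ≤ Vus k :=
            ((ih (T - k).toNat (by omega) k rfl).2) (by omega) hkT
          have hz : Vd t ≤ S (k - t - 1) + Vu k :=
            h3 (t, k) (mem_KT.mpr ⟨⟨hta, hc'⟩, by omega, hkT⟩)

          linarith
      refine ⟨hD, ?_⟩
      intro hta htb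
      by_cases hc : T - L + 1 ≤ t
      · rw [h8 t (Finset.mem_Icc.mpr ⟨max_le hc hta, htb⟩),
          hVu0 t (Finset.mem_Icc.mpr ⟨hc, htb⟩)]
      · push_neg at hc
        have hc' : t ≤ T - L := by omega
        rw [hVur t (Finset.mem_Icc.mpr ⟨hta, hc'⟩)]
        refine le_min (h7 t (Finset.mem_Icc.mpr ⟨hta, hc'⟩)) (le_csInf_image (by omega) ?_)
        intro k hk
        obtain ⟨hk1, hk2⟩ := Set.mem_Icc.mp hk
        have hDk : Vd k ≤ Vds k := by
          rcases eq_or_lt_of_le (show t ≤ k by omega) with heq | hlt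
          · exact heq ▸ hD (by omega) (by omega)
          · exact (ih (T - k).toNat (by omega) k rfl).1 (by omega) (by omega)
        have hz := h6 t (Finset.mem_Icc.mpr ⟨hta, hc'⟩) k (Finset.mem_Icc.mpr ⟨hk1, hk2⟩)

        linarith
  rw [hvstar]
  refine le_min h2 (le_csInf_image ht0T ?_)
  intro t ht
  obtain ⟨ht1, ht2⟩ := Set.mem_Icc.mp ht
  have hDt := (main (T - t).toNat t rfl).1 ht1 (by omega)
  have hz := h1 t (Finset.mem_Icc.mpr ⟨ht1, ht2⟩)

  linarith

end EUC
end

section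
/- Uplift payments equal the Lagrangian duality gap: for every price vector π ∈ ℝ^T, every generator's uplift is nonnegative, U_j(π) ≥ 0 for all j ∈ Λ, and the total uplift satisfies Σ_{j∈Λ} U_j(π) = Z_QIP − L(π). -/
namespace EUC

/-- uplift payments are nonnegative and total uplift equals
the Lagrangian duality gap `Z_QIP − L(π)`. -/
theorem uplift_eq_duality_gap {J : Type} [Fintype J] [Nonempty J]
    (T : ℤ) (hT : 2 ≤ T)
    (Lg lg s0g t0g : J → ℤ) (Cming Cmaxg Vbarg Vg : J → ℝ) (Ng : J → ℤ)
    (ag bg : J → ℤ → ℤ → ℝ) (Sg Spg : J → ℤ → ℝ)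
    (hL : ∀ j, 1 ≤ Lg j) (hl : ∀ j, 1 ≤ lg j) (hs0 : ∀ j, 1 ≤ s0g j)
    (ht0 : ∀ j, t0g j = max (Lg j - s0g j) 0) (ht0T : ∀ j, t0g j ≤ T - 1)
    (hCmin : ∀ j, 0 ≤ Cming j) (hCC : ∀ j, Cming j ≤ Cmaxg j)
    (hVbar : ∀ j, Cming j ≤ Vbarg j) (hV : ∀ j, 0 ≤ Vg j)
    (hN : ∀ j, 1 ≤ Ng j) (hS : ∀ j n, 0 ≤ Sg j n) (hSp : ∀ j n, 0 ≤ Spg j n)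
    (d : ℤ → ℝ)
    (pr : ℤ → ℝ)
    (xbar : J → Pt)
    (hfeas : ∀ j, memXI T (Lg j) (lg j) (t0g j) (Cming j) (Cmaxg j) (Vbarg j) (Vg j) (Ng j) (ag j) (bg j) (xbar j))
    (hbin : ∀ j, BinaryPt T (Lg j) (lg j) (t0g j) (xbar j))
    (hbal : ∀ s ∈ Finset.Icc (1 : ℤ) T, (∑ j, Qout T (Lg j) (lg j) (t0g j) (xbar j) s) = d s)
    (ZQIP : ℝ)
    (hZQIP : ZQIP = ∑ j, Gobj T (Lg j) (lg j) (t0g j) (s0g j) (Sg j) (Spg j) (xbar j))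
    (hoptQIP : ∀ x : J → Pt, (∀ j, memXI T (Lg j) (lg j) (t0g j) (Cming j) (Cmaxg j) (Vbarg j) (Vg j) (Ng j) (ag j) (bg j) (x j)) → (∀ j, BinaryPt T (Lg j) (lg j) (t0g j) (x j)) →
      (∀ s ∈ Finset.Icc (1 : ℤ) T, (∑ j, Qout T (Lg j) (lg j) (t0g j) (x j) s) = d s) →
      ZQIP ≤ ∑ j, Gobj T (Lg j) (lg j) (t0g j) (s0g j) (Sg j) (Spg j) (x j))
    (v : J → ℝ)
    (hv : ∀ j, IsGreatest {r : ℝ | ∃ x : Pt, memXI T (Lg j) (lg j) (t0g j) (Cming j) (Cmaxg j) (Vbarg j) (Vg j) (Ng j) (ag j) (bg j) x ∧ BinaryPt T (Lg j) (lg j) (t0g j) x ∧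
      r = priceInner T pr (Qout T (Lg j) (lg j) (t0g j) x) - Gobj T (Lg j) (lg j) (t0g j) (s0g j) (Sg j) (Spg j) x} (v j)) :
    (∀ j, 0 ≤ v j - (priceInner T pr (Qout T (Lg j) (lg j) (t0g j) (xbar j)) - Gobj T (Lg j) (lg j) (t0g j) (s0g j) (Sg j) (Spg j) (xbar j))) ∧
    (∑ j, (v j - (priceInner T pr (Qout T (Lg j) (lg j) (t0g j) (xbar j)) - Gobj T (Lg j) (lg j) (t0g j) (s0g j) (Sg j) (Spg j) (xbar j)))) =
      ZQIP - (priceInner T pr d - ∑ j, v j) := by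
  have hge : ∀ j, priceInner T pr (Qout T (Lg j) (lg j) (t0g j) (xbar j)) -
      Gobj T (Lg j) (lg j) (t0g j) (s0g j) (Sg j) (Spg j) (xbar j) ≤ v j := by
    intro j
    exact (hv j).2 ⟨xbar j, hfeas j, hbin j, rfl⟩
  have hsum : ∑ j, priceInner T pr (Qout T (Lg j) (lg j) (t0g j) (xbar j)) =
      priceInner T pr d := by
    unfold priceInner
    rw [Finset.sum_comm]
    apply Finset.sum_congr rfl
    intro s hs
    rw [← Finset.mul_sum, hbal s hs]
  constructor
  · intro j; linarith [hge j]
  · rw [Finset.sum_sub_distrib, Finset.sum_sub_distrib, hsum, hZQIP]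
    ring

end EUC
end
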